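/- arXiv:2301.12384 — 6 statements merged into one kernel-verified Lean document; each statement's English description precedes it below -/
import Mathlib

section
/- Let G be a finitely generated group with finite symmetric generating set S acting continuously on a compact metric space X, and let H be a finite-index subgroup of G. If the restricted action of H on X has the persistent shadowing property, then the action of G on X has the persistent shadowing property. -/
open MeasureTheory

def ContGroupAction (G : Type*) [Group G] (X : Type*) [MetricSpace X] (φ : G → X → X) : Prop :=
  (∀ g : G, Continuous (φ g)) ∧ (∀ g h : G, ∀ x : X, φ (g * h) x = φ g (φ h x)) ∧
    (∀ x : X, φ (1 : G) x = x)

def IsPseudoOrbit {G : Type*} [Group G] {X : Type*} [MetricSpace X]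
    (S : Set G) (ψ : G → X → X) (δ : ℝ) (f : G → X) : Prop :=
  ∀ s ∈ S, ∀ g : G, dist (f (s * g)) (ψ s (f g)) < δ

def CloseActions {G : Type*} [Group G] {X : Type*} [MetricSpace X]
    (S : Set G) (φ ψ : G → X → X) (δ : ℝ) : Prop :=
  ∀ s ∈ S, ∀ x : X, dist (φ s x) (ψ s x) < δ

def PersistentShadowing {G : Type*} [Group G] {X : Type*} [MetricSpace X]
    (S : Set G) (φ : G → X → X) : Prop :=
  ∀ ε > (0:ℝ), ∃ δ > (0:ℝ), ∀ ψ : G → X → X, ContGroupAction G X ψ → CloseActions S φ ψ δ →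
    ∀ f : G → X, IsPseudoOrbit S ψ δ f → ∃ p : X, ∀ g : G, dist (f g) (ψ g p) < ε

def Shadowing {G : Type*} [Group G] {X : Type*} [MetricSpace X]
    (S : Set G) (φ : G → X → X) : Prop :=
  ∀ ε > (0:ℝ), ∃ δ > (0:ℝ), ∀ f : G → X, IsPseudoOrbit S φ δ f →
    ∃ p : X, ∀ g : G, dist (f g) (φ g p) < ε

def PShSet {G : Type*} [Group G] {X : Type*} [MetricSpace X]
    (S : Set G) (φ : G → X → X) (δ ε : ℝ) : Set X :=
  {x | ∀ ψ : G → X → X, ContGroupAction G X ψ → CloseActions S φ ψ δ →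
    ∀ f : G → X, IsPseudoOrbit S ψ δ f → f 1 = x →
      ∃ p : X, ∀ g : G, dist (f g) (ψ g p) < ε}

def PShPoint {G : Type*} [Group G] {X : Type*} [MetricSpace X]
    (S : Set G) (φ : G → X → X) (x : X) : Prop :=
  ∀ ε > (0:ℝ), ∃ δ > (0:ℝ), x ∈ PShSet S φ δ ε

def ShPoint {G : Type*} [Group G] {X : Type*} [MetricSpace X]
    (S : Set G) (φ : G → X → X) (x : X) : Prop :=
  ∀ ε > (0:ℝ), ∃ δ > (0:ℝ), ∀ f : G → X, IsPseudoOrbit S φ δ f → f 1 = x →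
    ∃ p : X, ∀ g : G, dist (f g) (φ g p) < ε

def UPersisBetaPoint {G : Type*} [Group G] {X : Type*} [MetricSpace X]
    (S : Set G) (φ : G → X → X) (x : X) : Prop :=
  ∀ ε > (0:ℝ), ∃ δ > (0:ℝ), ∀ ψ : G → X → X, ContGroupAction G X ψ → CloseActions S φ ψ δ →
    ∀ x' : X, dist x' x < δ → ∃ y : X, ∀ g : G, dist (φ g x') (ψ g y) < ε

def BetaPersistent {G : Type*} [Group G] {X : Type*} [MetricSpace X]
    (S : Set G) (φ : G → X → X) : Prop :=
  ∀ ε > (0:ℝ), ∃ δ > (0:ℝ), ∀ ψ : G → X → X, ContGroupAction G X ψ → CloseActions S φ ψ δ →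
    ∀ x : X, ∃ y : X, ∀ g : G, dist (φ g x) (ψ g y) < ε

def CompatiblePSh {G : Type*} [Group G] {X : Type*} [MetricSpace X] [MeasurableSpace X]
    (S : Set G) (φ : G → X → X) (μ : Measure X) : Prop :=
  ∀ ε > (0:ℝ), ∃ δ > (0:ℝ), ∀ A : Set X, MeasurableSet A → 0 < μ A →
    (A ∩ PShSet S φ δ ε).Nonempty

def MeasSupp {X : Type*} [MetricSpace X] [MeasurableSpace X] (μ : Measure X) : Set X :=
  {x | ∀ U : Set X, IsOpen U → x ∈ U → 0 < μ U}

/-!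
Shadow a pseudo orbit of `G` by first shadowing its restriction to `H`. Every `g ∈ G` is `w * h`
with `h ∈ H` and `w` a word in `S` of length at most `n`, where `n` depends only on a choice of
coset representatives. Along one letter `s` the shadowing error grows by at most the pseudo-orbit
error, twice the distance between the actions and the oscillation of `φ s`, so by uniform
continuity of the finitely many `φ s` on the compact space, a fine enough shadowing on `H` stays
`ε`-close along the `n` letters.
-/

section Words

variable {G : Type*} [Group G]

lemma exists_list_prod_eq_of_closure_eq_top {S : Set G} (hSsym : ∀ s ∈ S, s⁻¹ ∈ S)
    (hSgen : Subgroup.closure S = ⊤) (g : G) :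
    ∃ l : List G, (∀ x ∈ l, x ∈ S) ∧ l.prod = g := by
  have hg : g ∈ (Subgroup.closure S).toSubmonoid := by rw [hSgen]; trivial
  rw [Subgroup.closure_toSubmonoid] at hg
  obtain ⟨l, hl, hprod⟩ := Submonoid.exists_list_of_mem_closure hg
  refine ⟨l, fun x hx => ?_, hprod⟩
  rcases hl x hx with h | h
  · exact h
  · simpa using hSsym _ (Set.mem_inv.mp h)

/-- Pick one word per coset of `H`; there are finitely many. -/
lemma exists_bound_list_prod_mul_mem {S : Set G} (hSsym : ∀ s ∈ S, s⁻¹ ∈ S)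
    (hSgen : Subgroup.closure S = ⊤) (H : Subgroup G) [H.FiniteIndex] :
    ∃ n : ℕ, ∀ g : G, ∃ l : List G, (∀ x ∈ l, x ∈ S) ∧ l.length ≤ n ∧
      ∃ h ∈ H, g = l.prod * h := by
  have : Fintype (G ⧸ H) := Fintype.ofFinite _
  choose L hLS hLprod using fun q : G ⧸ H =>
    exists_list_prod_eq_of_closure_eq_top hSsym hSgen q.out
  refine ⟨Finset.univ.sup fun q => (L q).length, fun g => ?_⟩
  refine ⟨L g, hLS g, Finset.le_sup (f := fun q => (L q).length) (Finset.mem_univ _),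
    (L g).prod⁻¹ * g, ?_, (mul_inv_cancel_left _ _).symm⟩
  rw [hLprod, ← QuotientGroup.eq]
  exact QuotientGroup.out_eq' _

end Words

lemma exists_pos_forall_dist_lt_of_finite {ι X : Type*} [MetricSpace X] [CompactSpace X]
    {S : Set ι} (hS : S.Finite) {φ : ι → X → X} (hφ : ∀ i, Continuous (φ i)) {ε : ℝ}
    (hε : 0 < ε) :
    ∃ ρ > 0, ∀ s ∈ S, ∀ x y : X, dist x y < ρ → dist (φ s x) (φ s y) < ε := by
  have : Finite S := hS.to_subtype
  have hequi : UniformEquicontinuous fun s : S => φ s :=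
    uniformEquicontinuous_finite.mpr fun s => CompactSpace.uniformContinuous_of_continuous (hφ s)
  obtain ⟨ρ, hρ, hequi⟩ := Metric.uniformEquicontinuous_iff.mp hequi ε hε
  exact ⟨ρ, hρ, fun s hs x y hxy => hequi x y hxy ⟨s, hs⟩⟩

section Actions

variable {G : Type*} [Group G] {X : Type*} [MetricSpace X]

lemma ContGroupAction.subgroup {ψ : G → X → X} (hψ : ContGroupAction G X ψ) (H : Subgroup G) :
    ContGroupAction H X fun h : H => ψ h :=
  ⟨fun h => hψ.1 h, fun a b x => hψ.2.1 a b x, fun x => hψ.2.2 x⟩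

lemma CloseActions.mono {S : Set G} {φ ψ : G → X → X} {δ δ' : ℝ} (h : CloseActions S φ ψ δ)
    (hδ : δ ≤ δ') : CloseActions S φ ψ δ' :=
  fun s hs x => (h s hs x).trans_le hδ

lemma CloseActions.subgroup {S : Set G} {φ ψ : G → X → X} {δ : ℝ} (h : CloseActions S φ ψ δ)
    {H : Subgroup G} {A : Set H} (hAS : ∀ a ∈ A, (a : G) ∈ S) :
    CloseActions A (fun h : H => φ h) (fun h : H => ψ h) δ :=
  fun a ha x => h a (hAS a ha) x

lemma IsPseudoOrbit.mono {S : Set G} {ψ : G → X → X} {δ δ' : ℝ} {f : G → X}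
    (h : IsPseudoOrbit S ψ δ f) (hδ : δ ≤ δ') : IsPseudoOrbit S ψ δ' f :=
  fun s hs g => (h s hs g).trans_le hδ

lemma IsPseudoOrbit.subgroup {S : Set G} {ψ : G → X → X} {δ : ℝ} {f : G → X}
    (h : IsPseudoOrbit S ψ δ f) {H : Subgroup G} {A : Set H} (hAS : ∀ a ∈ A, (a : G) ∈ S) :
    IsPseudoOrbit A (fun h : H => ψ h) δ fun h : H => f h :=
  fun a ha g => h a (hAS a ha) g

lemma dist_mul_lt_of_dist_lt {S : Set G} {φ ψ : G → X → X} {δ η ε : ℝ} {f : G → X} {p : X}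
    {s g : G} (hs : s ∈ S) (hψ : ψ (s * g) p = ψ s (ψ g p)) (hclose : CloseActions S φ ψ δ)
    (hf : IsPseudoOrbit S ψ δ f) (hφs : ∀ x y : X, dist x y < η → dist (φ s x) (φ s y) < ε)
    (hg : dist (f g) (ψ g p) < η) :
    dist (f (s * g)) (ψ (s * g) p) < 3 * δ + ε := by
  have h₁ := hf s hs g
  have h₂ := hclose s hs (f g)
  have h₃ := hφs _ _ hg
  have h₄ := hclose s hs (ψ g p)
  rw [hψ]
  calc dist (f (s * g)) (ψ s (ψ g p))
      ≤ dist (f (s * g)) (ψ s (f g)) + (dist (ψ s (f g)) (φ s (f g)) +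
          dist (φ s (f g)) (φ s (ψ g p)) + dist (φ s (ψ g p)) (ψ s (ψ g p))) :=
        (dist_triangle _ _ _).trans (add_le_add_right (dist_triangle4 _ _ _ _) _)
    _ < 3 * δ + ε := by rw [dist_comm (ψ s _)] at *; linarith

lemma exists_pos_dist_list_prod_mul_lt [CompactSpace X] {S : Set G} (hS : S.Finite)
    {φ : G → X → X} (hφ : ∀ g, Continuous (φ g)) (n : ℕ) {ε : ℝ} (hε : 0 < ε) :
    ∃ η > 0, ∀ ψ : G → X → X, (∀ g h x, ψ (g * h) x = ψ g (ψ h x)) →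
      CloseActions S φ ψ η → ∀ f : G → X, IsPseudoOrbit S ψ η f →
      ∀ (p : X) (l : List G), (∀ x ∈ l, x ∈ S) → l.length ≤ n →
      ∀ g, dist (f g) (ψ g p) < η → dist (f (l.prod * g)) (ψ (l.prod * g) p) < ε := by
  induction n generalizing ε with
  | zero =>
    refine ⟨ε, hε, fun ψ _ _ f _ p l _ hl g hg => ?_⟩
    simpa [List.length_eq_zero_iff.mp (Nat.le_zero.mp hl)] using hg
  | succ n ih =>
    obtain ⟨ρ, hρ, hφρ⟩ := exists_pos_forall_dist_lt_of_finite hS hφ (half_pos hε)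
    obtain ⟨η, hη, hprop⟩ := ih (lt_min hρ (by positivity : 0 < ε / 6))
    refine ⟨min η (ε / 6), lt_min hη (by positivity), ?_⟩
    intro ψ hψ hclose f hf p l hlS hl g hg
    have hclose' := hclose.mono (min_le_left _ _)
    have hf' := hf.mono (min_le_left _ _)
    have hg' := hg.trans_le (min_le_left _ _)
    rcases l with _ | ⟨s, l⟩
    · simpa using (hprop ψ hψ hclose' f hf' p [] (by simp) (Nat.zero_le _) g hg').trans_le
        ((min_le_right _ _).trans (by linarith))
    · have hl' := hprop ψ hψ hclose' f hf' p l (fun x hx => hlS x (List.mem_cons_of_mem s hx))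
        (Nat.le_of_succ_le_succ hl) g hg'
      have hstep := dist_mul_lt_of_dist_lt (hlS s List.mem_cons_self) (hψ s _ p) hclose hf
        (hφρ s (hlS s List.mem_cons_self)) (hl'.trans_le (min_le_left _ _))
      rw [List.prod_cons, mul_assoc]
      have : min η (ε / 6) ≤ ε / 6 := min_le_right _ _
      linarith

end Actions

theorem stmt0_general {G : Type*} [Group G] {X : Type*} [MetricSpace X] [CompactSpace X]
    (S : Set G) (hSfin : S.Finite) (hSsym : ∀ s ∈ S, s⁻¹ ∈ S)
    (hSgen : Subgroup.closure S = ⊤)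
    (φ : G → X → X) (hφ : ContGroupAction G X φ)
    (H : Subgroup G) (hH : H.FiniteIndex)
    (A : Set H) (hAS : ∀ a ∈ A, (a : G) ∈ S)
    (hrest : PersistentShadowing A (fun (h : H) => φ (h : G))) :
    PersistentShadowing S φ := by
  obtain ⟨n, hn⟩ := exists_bound_list_prod_mul_mem hSsym hSgen H
  intro ε hε
  obtain ⟨η, hη, hprop⟩ := exists_pos_dist_list_prod_mul_lt hSfin hφ.1 n hε
  obtain ⟨δ, hδ, hshadowH⟩ := hrest η hη
  refine ⟨min δ η, lt_min hδ hη, fun ψ hψ hclose f hf => ?_⟩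
  obtain ⟨p, hp⟩ := hshadowH _ (hψ.subgroup H) ((hclose.mono (min_le_left _ _)).subgroup hAS) _
    ((hf.mono (min_le_left _ _)).subgroup hAS)
  refine ⟨p, fun g => ?_⟩
  obtain ⟨l, hlS, hl, h, hh, rfl⟩ := hn g
  exact hprop ψ hψ.2.1 (hclose.mono (min_le_right _ _)) f (hf.mono (min_le_right _ _)) p l hlS hl
    h (hp ⟨h, hh⟩)

theorem stmt0 {G : Type*} [Group G] {X : Type*} [MetricSpace X] [CompactSpace X]
    (S : Set G) (hSfin : S.Finite) (hSsym : ∀ s ∈ S, s⁻¹ ∈ S)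
    (hSgen : Subgroup.closure S = ⊤)
    (φ : G → X → X) (hφ : ContGroupAction G X φ)
    (H : Subgroup G) (hH : H.FiniteIndex)
    (A : Set H) (hAfin : A.Finite) (hAsym : ∀ a ∈ A, a⁻¹ ∈ A)
    (hAgen : Subgroup.closure A = ⊤) (hAS : ∀ a ∈ A, (a : G) ∈ S)
    (hrest : PersistentShadowing A (fun (h : H) => φ (h : G))) :
    PersistentShadowing S φ :=
  stmt0_general S hSfin hSsym hSgen φ hφ H hH A hAS hrest
end

section
/- Let F₂ = ⟨a,b⟩ be the free group on two generators acting continuously on a compact metric space X via φ. If φ has the persistent shadowing property, then the homeomorphism φ_{a⁻¹b}: X → X (the action of the element a⁻¹b) has the persistent shadowing property as a single homeomorphism. -/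
open MeasureTheory

def HomeoPersistentShadowing {X : Type*} [MetricSpace X] (T : X → X) : Prop :=
  ∀ ε > (0:ℝ), ∃ δ > (0:ℝ), ∀ T' : X ≃ X, Continuous T' → Continuous T'.symm →
    (∀ x : X, dist (T x) (T' x) < δ) →
    ∀ x : ℤ → X, (∀ n : ℤ, dist (T' (x n)) (x (n + 1)) < δ) →
      ∃ y : X, ∀ n : ℤ, dist ((T' ^ n) y) (x n) < ε

/-!
Given a homeomorphism `T` close to `φ (a⁻¹ b)`, let `ψ` be the action of `F₂` with `ψ a = φ a`
and `ψ (a⁻¹ b) = T`; uniform continuity of `φ a` and `φ (a⁻¹ b)⁻¹` makes `ψ` close to `φ` on the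
generators. A `T`-pseudo-orbit `(xₙ)` is spread over `F₂` by sending `g = r (a⁻¹ b)ⁿ`, with `r`
in a transversal of the cosets of `⟨a⁻¹ b⟩`, to `ψ r xₙ`. For a suitable transversal this is
exactly `ψ`-equivariant except at the two steps `(a⁻¹ b)ⁿ ↔ a (a⁻¹ b)ⁿ`, where the error is that
of the pseudo-orbit, possibly pushed by `φ a`. The `ψ`-orbit shadowing this pseudo-orbit of `F₂`
then shadows `(xₙ)` along `⟨a⁻¹ b⟩`, where `ψ` acts by powers of `T`.
-/

open Equiv

section ContGroupAction

variable {G X : Type*} [Group G] [MetricSpace X] {φ : G → X → X}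

def ContGroupAction.toPermHom (hφ : ContGroupAction G X φ) : G →* Perm X where
  toFun g :=
    { toFun := φ g
      invFun := φ g⁻¹
      left_inv x := by rw [← hφ.2.1, inv_mul_cancel, hφ.2.2]
      right_inv x := by rw [← hφ.2.1, mul_inv_cancel, hφ.2.2] }
  map_one' := Equiv.ext hφ.2.2
  map_mul' g h := Equiv.ext (hφ.2.1 g h)

@[simp]
lemma ContGroupAction.toPermHom_apply (hφ : ContGroupAction G X φ) (g : G) (x : X) :
    hφ.toPermHom g x = φ g x := rfl

@[simp]
lemma ContGroupAction.toPermHom_inv_apply (hφ : ContGroupAction G X φ) (g : G) (x : X) :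
    (hφ.toPermHom g)⁻¹ x = φ g⁻¹ x := by
  rw [← map_inv]; rfl

lemma ContGroupAction.of_monoidHom (ρ : G →* Perm X) (hρ : ∀ g, Continuous (ρ g)) :
    ContGroupAction G X fun g => ρ g :=
  ⟨hρ, fun g h x => by simp [Perm.mul_apply], fun x => by simp⟩

end ContGroupAction

lemma Equiv.Perm.dist_inv_apply_lt {X : Type*} [MetricSpace X] {F T : Perm X} {δ δ₀ : ℝ}
    (hFT : ∀ y, dist (F y) (T y) < δ) (hF : ∀ {u v}, dist u v < δ → dist (F⁻¹ u) (F⁻¹ v) < δ₀)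
    (y : X) : dist (F⁻¹ y) (T⁻¹ y) < δ₀ := by
  simpa [dist_comm] using hF (hFT (T⁻¹ y))

namespace FreeGroup

lemma continuous_lift_apply {α X : Type*} [TopologicalSpace X] (f : α → Perm X)
    (hf : ∀ t, Continuous (f t)) (hf_inv : ∀ t, Continuous ⇑(f t)⁻¹) (g : FreeGroup α) :
    Continuous (lift f g) := by
  induction g with
  | C1 => exact continuous_id
  | of t => simpa using hf t
  | inv_of t _ => simpa using hf_inv t
  | mul g h hg hh => simpa [Perm.coe_mul] using hg.comp hh

variable {α A : Type*} [AddGroup A]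

def shearMulLeft {G : Type*} [Group G] (g : G) (J : G → A) : Perm (G × A) where
  toFun p := (g * p.1, p.2 + J p.1)
  invFun p := (g⁻¹ * p.1, p.2 - J (g⁻¹ * p.1))
  left_inv p := by simp
  right_inv p := by simp

def integrate (J : α → FreeGroup α → A) (g : FreeGroup α) : A :=
  (lift (fun t => shearMulLeft (of t) (J t)) g (1, 0)).2

lemma fst_lift_shearMulLeft (J : α → FreeGroup α → A) (g : FreeGroup α) (p : FreeGroup α × A) :
    (lift (fun t => shearMulLeft (of t) (J t)) g p).1 = g * p.1 := by
  induction g generalizing p with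
  | C1 => simp
  | of t => simp [shearMulLeft]
  | inv_of t _ => simp [Perm.inv_def, shearMulLeft]
  | mul g h ihg ihh => simp [Perm.mul_apply, ihg, ihh, mul_assoc]

lemma lift_shearMulLeft_apply (J : α → FreeGroup α → A) (g : FreeGroup α) :
    lift (fun t => shearMulLeft (of t) (J t)) g (1, 0) = (g, integrate J g) :=
  Prod.ext (by simpa using fst_lift_shearMulLeft J g (1, 0)) rfl

@[simp]
lemma integrate_one (J : α → FreeGroup α → A) : integrate J 1 = 0 := rfl

lemma integrate_of_mul (J : α → FreeGroup α → A) (t : α) (g : FreeGroup α) :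
    integrate J (of t * g) = integrate J g + J t g := by
  rw [integrate, _root_.map_mul, Perm.mul_apply, lift_shearMulLeft_apply, lift_apply_of]
  rfl

end FreeGroup

section TwoGenerators

open FreeGroup Subgroup

local notation "𝔞" => FreeGroup.of true
local notation "𝔟" => FreeGroup.of false
local notation "𝔠" => (FreeGroup.of true)⁻¹ * FreeGroup.of false

/-- In the basis `𝔟, 𝔠` of the free group, `g = r * 𝔠 ^ zpowersIndex g` where the reduced word
`r` does not end in `𝔠` or `𝔠⁻¹`. -/
noncomputable def zpowersIndex : FreeGroup Bool → ℤ :=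
  integrate fun t => cond t (-(zpowers 𝔠 : Set (FreeGroup Bool)).indicator 1) 0

lemma zpowersIndex_of_false_mul (g : FreeGroup Bool) :
    zpowersIndex (𝔟 * g) = zpowersIndex g := by
  simp [zpowersIndex, integrate_of_mul]

lemma zpowersIndex_of_true_mul (g : FreeGroup Bool) :
    zpowersIndex (𝔞 * g) = zpowersIndex g - (zpowers 𝔠 : Set (FreeGroup Bool)).indicator 1 g := by
  simp [zpowersIndex, integrate_of_mul, sub_eq_add_neg]

lemma zpowersIndex_of_true_mul_of_notMem {g : FreeGroup Bool} (hg : g ∉ zpowers 𝔠) :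
    zpowersIndex (𝔞 * g) = zpowersIndex g := by
  simp [zpowersIndex_of_true_mul, Set.indicator_of_notMem, hg]

lemma zpowersIndex_mul_of_mem {g : FreeGroup Bool} (hg : g ∈ zpowers 𝔠) :
    zpowersIndex (𝔠 * g) = zpowersIndex g + 1 := by
  have h := zpowersIndex_of_true_mul (𝔠 * g)
  rw [← mul_assoc, mul_inv_cancel_left, zpowersIndex_of_false_mul,
    Set.indicator_of_mem (mul_mem (mem_zpowers _) hg)] at h
  simp only [Pi.one_apply] at h
  linarith

lemma zpowersIndex_zpow (n : ℤ) : zpowersIndex (𝔠 ^ n) = n := by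
  induction n using Int.induction_on with
  | zero => exact integrate_one _
  | succ n ih =>
    rw [add_comm, zpow_one_add, zpowersIndex_mul_of_mem (zpow_mem_zpowers _ _), ih, add_comm]
  | pred n ih =>
    have h := zpowersIndex_mul_of_mem (zpow_mem_zpowers 𝔠 (-n - 1))
    rw [← zpow_one_add, show 1 + (-(n : ℤ) - 1) = -n by ring, ih] at h
    linarith

lemma zpowersIndex_of_true_mul_zpow (n : ℤ) : zpowersIndex (𝔞 * 𝔠 ^ n) = n - 1 := by
  simp [zpowersIndex_of_true_mul, zpowersIndex_zpow, zpow_mem_zpowers]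

variable {X : Type*}

noncomputable def extendAlongZPowers (ρ : FreeGroup Bool →* Perm X) (x : ℤ → X)
    (g : FreeGroup Bool) : X :=
  ρ (g * 𝔠 ^ (-zpowersIndex g)) (x (zpowersIndex g))

variable (ρ : FreeGroup Bool →* Perm X) (x : ℤ → X)

lemma extendAlongZPowers_zpow (n : ℤ) : extendAlongZPowers ρ x (𝔠 ^ n) = x n := by
  simp [extendAlongZPowers, zpowersIndex_zpow]

lemma extendAlongZPowers_mul {s g : FreeGroup Bool}
    (h : zpowersIndex (s * g) = zpowersIndex g) :
    extendAlongZPowers ρ x (s * g) = ρ s (extendAlongZPowers ρ x g) := by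
  simp [extendAlongZPowers, h, mul_assoc, Perm.mul_apply]

lemma extendAlongZPowers_of_true_mul_zpow (n : ℤ) :
    extendAlongZPowers ρ x (𝔞 * 𝔠 ^ n) = ρ 𝔞 (ρ 𝔠 (x (n - 1))) := by
  rw [extendAlongZPowers, zpowersIndex_of_true_mul_zpow, mul_assoc, ← zpow_add,
    show n + -(n - 1) = 1 by ring, zpow_one, _root_.map_mul, Perm.mul_apply]

lemma isPseudoOrbit_extendAlongZPowers [MetricSpace X] {δ : ℝ}
    (hx : ∀ n, dist (x (n + 1)) (ρ 𝔠 (x n)) < δ)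
    (hax : ∀ n, dist (ρ 𝔞 (ρ 𝔠 (x n))) (ρ 𝔞 (x (n + 1))) < δ) :
    IsPseudoOrbit {𝔞, 𝔟, 𝔞⁻¹, 𝔟⁻¹} (fun g => ρ g) δ (extendAlongZPowers ρ x) := by
  have hδ : 0 < δ := dist_nonneg.trans_lt (hx 0)
  have exact_step {s g : FreeGroup Bool} (h : zpowersIndex (s * g) = zpowersIndex g) :
      dist (extendAlongZPowers ρ x (s * g)) (ρ s (extendAlongZPowers ρ x g)) < δ := by
    rwa [extendAlongZPowers_mul ρ x h, dist_self]
  rintro s (rfl | rfl | rfl | rfl) g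
  · by_cases hg : g ∈ zpowers 𝔠
    · obtain ⟨n, rfl⟩ := mem_zpowers_iff.1 hg
      simpa [extendAlongZPowers_of_true_mul_zpow, extendAlongZPowers_zpow] using hax (n - 1)
    · exact exact_step (zpowersIndex_of_true_mul_of_notMem hg)
  · exact exact_step (zpowersIndex_of_false_mul g)
  · by_cases hg : 𝔞⁻¹ * g ∈ zpowers 𝔠
    · obtain ⟨n, hn⟩ := mem_zpowers_iff.1 hg
      obtain rfl : g = 𝔞 * 𝔠 ^ n := by rw [hn, mul_inv_cancel_left]
      rw [inv_mul_cancel_left]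
      simpa [extendAlongZPowers_zpow, extendAlongZPowers_of_true_mul_zpow] using hx (n - 1)
    · have h := zpowersIndex_of_true_mul_of_notMem hg
      rw [mul_inv_cancel_left] at h
      exact exact_step h.symm
  · have h := zpowersIndex_of_false_mul (𝔟⁻¹ * g)
    rw [mul_inv_cancel_left] at h
    exact exact_step h.symm

def actionWith (A T : Perm X) : FreeGroup Bool →* Perm X :=
  lift fun t => cond t A (A * T)

@[simp]
lemma actionWith_of_true (A T : Perm X) : actionWith A T 𝔞 = A := by simp [actionWith]

@[simp]
lemma actionWith_of_false (A T : Perm X) : actionWith A T 𝔟 = A * T := by simp [actionWith]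

lemma actionWith_inv_of_true_mul_of_false (A T : Perm X) : actionWith A T 𝔠 = T := by simp

lemma continuous_actionWith_apply [TopologicalSpace X] {A T : Perm X} (hA : Continuous A)
    (hA_inv : Continuous ⇑A⁻¹) (hT : Continuous T) (hT_inv : Continuous ⇑T⁻¹)
    (g : FreeGroup Bool) : Continuous (actionWith A T g) := by
  refine continuous_lift_apply _ (fun t => ?_) (fun t => ?_) g
  · cases t with
    | false => simpa using hA.comp hT
    | true => simpa using hA
  · cases t with
    | false => simpa [mul_inv_rev] using hT_inv.comp hA_inv
    | true => simpa using hA_inv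

lemma closeActions_actionWith [MetricSpace X] {φ : FreeGroup Bool → X → X}
    (hφ : ContGroupAction (FreeGroup Bool) X φ) {T : Perm X} {δ δ₀ : ℝ} (hδ₀ : 0 < δ₀)
    (hT : ∀ y, dist (φ 𝔠 y) (T y) < δ)
    (ha : ∀ {u v}, dist u v < δ → dist (φ 𝔞 u) (φ 𝔞 v) < δ₀)
    (hc : ∀ {u v}, dist u v < δ → dist (φ 𝔠⁻¹ u) (φ 𝔠⁻¹ v) < δ₀) :
    CloseActions {𝔞, 𝔟, 𝔞⁻¹, 𝔟⁻¹} φ (fun g => actionWith (hφ.toPermHom 𝔞) T g) δ₀ := by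
  rintro s (rfl | rfl | rfl | rfl) y
  · simpa using hδ₀
  · have hb : φ 𝔟 y = φ 𝔞 (φ 𝔠 y) := by rw [← hφ.2.1, mul_inv_cancel_left]
    simpa [hb, Perm.mul_apply] using ha (hT y)
  · simpa using hδ₀
  · have hφb : φ 𝔟⁻¹ y = (hφ.toPermHom 𝔠)⁻¹ (φ 𝔞⁻¹ y) := by
      rw [ContGroupAction.toPermHom_inv_apply, ← hφ.2.1]; group
    have hρb : actionWith (hφ.toPermHom 𝔞) T 𝔟⁻¹ y = T⁻¹ (φ 𝔞⁻¹ y) := by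
      simp [mul_inv_rev, Perm.mul_apply]
    simpa only [hφb, hρb] using Perm.dist_inv_apply_lt hT hc (φ 𝔞⁻¹ y)

end TwoGenerators

theorem stmt3 {X : Type*} [MetricSpace X] [CompactSpace X]
    (φ : FreeGroup Bool → X → X) (hφ : ContGroupAction (FreeGroup Bool) X φ)
    (S : Set (FreeGroup Bool))
    (hS : S = {FreeGroup.of true, FreeGroup.of false,
      (FreeGroup.of true)⁻¹, (FreeGroup.of false)⁻¹})
    (h : PersistentShadowing S φ) :
    HomeoPersistentShadowing (φ ((FreeGroup.of true)⁻¹ * FreeGroup.of false)) := by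
  subst hS
  intro ε hε
  obtain ⟨δ₀, hδ₀, hshadow⟩ := h ε hε
  have uniform_modulus (g) := Metric.uniformContinuous_iff.1
    (CompactSpace.uniformContinuous_of_continuous (hφ.1 g)) δ₀ hδ₀
  obtain ⟨δa, hδa, ha⟩ := uniform_modulus (FreeGroup.of true)
  obtain ⟨δc, hδc, hc⟩ := uniform_modulus ((FreeGroup.of true)⁻¹ * FreeGroup.of false)⁻¹
  obtain ⟨δ, hδ, hδ₀_le, hδa_le, hδc_le⟩ : ∃ δ > 0, δ ≤ δ₀ ∧ δ ≤ δa ∧ δ ≤ δc :=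
    ⟨min δ₀ (min δa δc), by positivity, by simp, by simp, by simp⟩
  refine ⟨δ, hδ, fun T hT hT_symm hTφ x hx => ?_⟩
  set ρ := actionWith (hφ.toPermHom (FreeGroup.of true)) T
  have hρc : ρ ((FreeGroup.of true)⁻¹ * FreeGroup.of false) = T :=
    actionWith_inv_of_true_mul_of_false _ _
  have hρ : ContGroupAction (FreeGroup Bool) X fun g => ρ g :=
    .of_monoidHom ρ (continuous_actionWith_apply (hφ.1 _) (hφ.1 _) hT hT_symm)
  have hclose := closeActions_actionWith hφ hδ₀ hTφ (fun h => ha (h.trans_le hδa_le))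
    (fun h => hc (h.trans_le hδc_le))
  have hpseudo := isPseudoOrbit_extendAlongZPowers ρ x (δ := δ₀)
    (fun n => by rw [hρc, dist_comm]; exact (hx n).trans_le hδ₀_le)
    (fun n => by rw [hρc]; simpa [ρ] using ha ((hx n).trans_le hδa_le))
  obtain ⟨p, hp⟩ := hshadow _ hρ hclose _ hpseudo
  refine ⟨p, fun n => ?_⟩
  have := hp (((FreeGroup.of true)⁻¹ * FreeGroup.of false) ^ n)
  rwa [extendAlongZPowers_zpow, map_zpow, hρc, dist_comm] at this
end

section
/- Let F₂ = ⟨a,b⟩ be the free group on two generators acting continuously on a compact metric space X via φ. If φ has the shadowing property, then the homeomorphism φ_{a⁻¹b}: X → X has the shadowing property as a single homeomorphism. -/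
open MeasureTheory

/-!
Write `a = of true`, `b = of false` and `c = a⁻¹ * b`. Since `{a, c}` is again a free basis, every
`g ∈ F₂` is uniquely `g = t * cⁿ` with `t` a reduced word in `a, c` not ending in `c^{±1}`. Given a
`δ`-pseudo orbit `(xₙ)` of `φ_c`, put `f (t * cⁿ) = φ_t (xₙ)`. Left multiplication by `a^{±1}`
keeps `n` and multiplies `t`, so `f` is exactly equivariant there; the same holds for `b^{±1}`
except on the cosets `⟨c⟩` and `a⟨c⟩`, where `n` moves by one and the error is
`d(φ_a xₙ₊₁, φ_a φ_c xₙ)` or `d(xₙ₋₁, φ_c⁻¹ xₙ)`, small by uniform continuity. So `f` is a pseudo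
orbit of the `F₂`-action, and a point shadowing it shadows `(xₙ)` along the powers of `c`.
-/

namespace FreeGroup

variable {α : Type*} [DecidableEq α]

theorem getLast?_reduce_cons (x : α × Bool) {L : List (α × Bool)} (hL : reduce L = L) :
    (reduce (x :: L)).getLast? = L.getLast? ∨ reduce (x :: L) = [x] ∨ reduce (x :: L) = [] := by
  rw [reduce.cons, hL]
  rcases L with _ | ⟨y, L⟩
  · exact .inr (.inl rfl)
  · dsimp only
    split_ifs
    · rcases L with _ | ⟨z, L⟩
      · exact .inr (.inr rfl)
      · exact .inl (by simp [List.getLast?_cons_cons])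
    · exact .inl (by simp [List.getLast?_cons_cons])

theorem getLast?_toWord_mk_mul (x : α × Bool) (t : FreeGroup α) :
    (mk [x] * t).toWord.getLast? = t.toWord.getLast? ∨ mk [x] * t = mk [x] ∨ mk [x] * t = 1 := by
  rw [← toWord_inj, ← toWord_inj, toWord_one, toWord_mul, toWord_mk, reduce_singleton,
    List.singleton_append]
  exact getLast?_reduce_cons x (reduce_toWord t)

/-- Under `(t, n) ↦ t * of i ^ n`, `notEndingIn i × ℤ` is a copy of `FreeGroup α`. -/
def notEndingIn (i : α) : Set (FreeGroup α) := {t | ∀ x ∈ t.toWord.getLast?, x.1 ≠ i}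

theorem one_mem_notEndingIn (i : α) : (1 : FreeGroup α) ∈ notEndingIn i := by
  simp [notEndingIn]

theorem mk_singleton_mem_notEndingIn {i : α} {x : α × Bool} :
    mk [x] ∈ notEndingIn i ↔ x.1 ≠ i := by
  rw [notEndingIn, Set.mem_ofPred_eq, toWord_mk, reduce_singleton]
  simp

theorem mk_mul_mem_notEndingIn {i : α} {x : α × Bool} (hx : x.1 ≠ i) {t : FreeGroup α}
    (ht : t ∈ notEndingIn i) : mk [x] * t ∈ notEndingIn i := by
  rcases getLast?_toWord_mk_mul x t with h | h | h
  · rwa [notEndingIn, Set.mem_ofPred_eq, h]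
  · rwa [h, mk_singleton_mem_notEndingIn]
  · exact h ▸ one_mem_notEndingIn i

theorem mk_mul_ne_one {i : α} (b : Bool) {t : FreeGroup α} (ht : t ∈ notEndingIn i) :
    mk [(i, b)] * t ≠ 1 := by
  intro h
  rw [eq_inv_of_mul_eq_one_right h, inv_mk] at ht
  simp [invRev, mk_singleton_mem_notEndingIn] at ht

theorem mk_mul_mem_notEndingIn_of_ne_one {i : α} (b : Bool) {t : FreeGroup α}
    (ht : t ∈ notEndingIn i) (h1 : t ≠ 1) : mk [(i, b)] * t ∈ notEndingIn i := by
  rcases getLast?_toWord_mk_mul (i, b) t with h | h | h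
  · rwa [notEndingIn, Set.mem_ofPred_eq, h]
  · exact absurd (mul_eq_left.mp h) h1
  · exact absurd h (mk_mul_ne_one b ht)

theorem of_mul_mem_notEndingIn_iff {i j : α} (hj : j ≠ i) {t : FreeGroup α} :
    of j * t ∈ notEndingIn i ↔ t ∈ notEndingIn i := by
  refine ⟨fun h => ?_, mk_mul_mem_notEndingIn hj⟩
  have : mk [(j, false)] = (of j)⁻¹ := by simp [of, inv_mk, invRev]
  simpa [this] using mk_mul_mem_notEndingIn (x := (j, false)) hj h

variable (i : α)

instance : One (notEndingIn i) := ⟨⟨1, one_mem_notEndingIn i⟩⟩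

@[simp] theorem coe_one_notEndingIn : ((1 : notEndingIn i) : FreeGroup α) = 1 := rfl

def letterPerm (j : α) (hj : j ≠ i) : Equiv.Perm (notEndingIn i × ℤ) :=
  ((Equiv.mulLeft (of j)).subtypeEquiv fun _ => (of_mul_mem_notEndingIn_iff hj).symm).prodCongr
    (Equiv.refl ℤ)

theorem letterPerm_apply (j : α) (hj : j ≠ i) (z : notEndingIn i × ℤ) :
    letterPerm i j hj z = (⟨of j * z.1, (of_mul_mem_notEndingIn_iff hj).2 z.1.2⟩, z.2) := rfl

theorem letterPerm_symm_apply (j : α) (hj : j ≠ i) (z : notEndingIn i × ℤ) :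
    (letterPerm i j hj).symm z =
      (⟨(of j)⁻¹ * z.1, (of_mul_mem_notEndingIn_iff hj).1 (by simp)⟩, z.2) := rfl

/-- Left multiplication by `mk [(i, b)]` in the coordinates `t * of i ^ n`. -/
def cyclicStep (b : Bool) (z : notEndingIn i × ℤ) : notEndingIn i × ℤ :=
  if h : (z.1 : FreeGroup α) = 1 then (1, z.2 + bif b then 1 else -1)
  else (⟨mk [(i, b)] * z.1, mk_mul_mem_notEndingIn_of_ne_one b z.1.2 h⟩, z.2)

theorem cyclicStep_not_cyclicStep (b : Bool) (z : notEndingIn i × ℤ) :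
    cyclicStep i (!b) (cyclicStep i b z) = z := by
  obtain ⟨⟨t, ht⟩, n⟩ := z
  by_cases h : t = 1
  · subst h
    cases b <;> simp [cyclicStep] <;> rfl
  · have hinv : mk [(i, !b)] = (mk [(i, b)])⁻¹ := by simp [inv_mk, invRev]
    simp only [cyclicStep, h, ↓reduceDIte, mk_mul_ne_one b ht, hinv, inv_mul_cancel_left]

def cyclicPerm : Equiv.Perm (notEndingIn i × ℤ) where
  toFun := cyclicStep i true
  invFun := cyclicStep i false
  left_inv := cyclicStep_not_cyclicStep i true
  right_inv := cyclicStep_not_cyclicStep i false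

theorem cyclicPerm_apply_one (n : ℤ) : cyclicPerm i (1, n) = (1, n + 1) := by
  simp [cyclicPerm, cyclicStep]

theorem cyclicPerm_symm_apply_one (n : ℤ) : (cyclicPerm i).symm (1, n) = (1, n - 1) := by
  simp [cyclicPerm, cyclicStep, sub_eq_add_neg]

theorem cyclicPerm_zpow_apply_one (k n : ℤ) : (cyclicPerm i ^ k) (1, n) = (1, n + k) := by
  induction k using Int.induction_on generalizing n with
  | zero => simp
  | succ k ih =>
    rw [zpow_add_one, Equiv.Perm.mul_apply, cyclicPerm_apply_one, ih, add_right_comm, add_assoc]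
  | pred k ih =>
    rw [zpow_sub_one, Equiv.Perm.mul_apply, Equiv.Perm.inv_def, cyclicPerm_symm_apply_one, ih]
    ring_nf

theorem cyclicPerm_apply_of_ne_one {z : notEndingIn i × ℤ} (h : (z.1 : FreeGroup α) ≠ 1) :
    ((cyclicPerm i z).1 : FreeGroup α) = of i * z.1 ∧ (cyclicPerm i z).2 = z.2 := by
  simp [cyclicPerm, cyclicStep, h, of]

theorem cyclicPerm_symm_apply_of_ne_one {z : notEndingIn i × ℤ} (h : (z.1 : FreeGroup α) ≠ 1) :
    ((cyclicPerm i).symm z).1 = (of i)⁻¹ * (z.1 : FreeGroup α) ∧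
      ((cyclicPerm i).symm z).2 = z.2 := by
  simp [cyclicPerm, cyclicStep, h, of, inv_mk, invRev]

end FreeGroup

theorem isPseudoOrbit_of_perm {G Z X : Type*} [Group G] [MetricSpace X] {S : Set G}
    {φ : G → X → X} {δ : ℝ} (ρ : G →* Equiv.Perm Z) (F : Z → X) (o : Z)
    (h : ∀ s ∈ S, ∀ z, dist (F (ρ s z)) (φ s (F z)) < δ) :
    IsPseudoOrbit S φ δ fun g => F (ρ g o) := by
  intro s hs g
  simpa only [map_mul, Equiv.Perm.mul_apply] using h s hs (ρ g o)

open FreeGroup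

/-- Reads words in the letters `true, false` as words in `a, c`. -/
def acBasis : FreeGroup Bool →* FreeGroup Bool :=
  FreeGroup.lift fun j => bif j then of true else (of true)⁻¹ * of false

@[simp] theorem acBasis_of_true : acBasis (of true) = of true := lift_apply_of

@[simp] theorem acBasis_of_false : acBasis (of false) = (of true)⁻¹ * of false := lift_apply_of

/-- Left multiplication on `F₂` in the coordinates `acBasis t * cⁿ`, using `b = a * c`. -/
def cosetAction : FreeGroup Bool →* Equiv.Perm (notEndingIn false × ℤ) :=
  FreeGroup.lift fun j =>
    bif j then letterPerm false true (by decide)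
    else letterPerm false true (by decide) * cyclicPerm false

def cosetLift {X : Type*} (φ : FreeGroup Bool → X → X) (x : ℤ → X)
    (z : notEndingIn false × ℤ) : X :=
  φ (acBasis z.1) (x z.2)

theorem cosetAction_of_true : cosetAction (of true) = letterPerm false true (by decide) :=
  lift_apply_of

theorem cosetAction_of_false :
    cosetAction (of false) = letterPerm false true (by decide) * cyclicPerm false :=
  lift_apply_of

theorem cosetAction_zpow_apply_one (n : ℤ) :
    cosetAction (((of true)⁻¹ * of false) ^ n) (1, 0) = (1, n) := by
  have : cosetAction ((of true)⁻¹ * of false) = cyclicPerm false := by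
    rw [_root_.map_mul, _root_.map_inv, cosetAction_of_true, cosetAction_of_false,
      inv_mul_cancel_left]
  rw [map_zpow, this, cyclicPerm_zpow_apply_one, zero_add]

section
variable {X : Type*} [MetricSpace X] {φ : FreeGroup Bool → X → X} (x : ℤ → X)

theorem cosetLift_one (hφ : ContGroupAction (FreeGroup Bool) X φ) (n : ℤ) :
    cosetLift φ x (1, n) = x n := by
  simp [cosetLift, hφ.2.2]

theorem cosetLift_letterPerm (hφ : ContGroupAction (FreeGroup Bool) X φ)
    (z : notEndingIn false × ℤ) :
    cosetLift φ x (letterPerm false true (by decide) z) = φ (of true) (cosetLift φ x z) := by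
  simp [cosetLift, letterPerm_apply, hφ.2.1]

theorem cosetLift_letterPerm_symm (hφ : ContGroupAction (FreeGroup Bool) X φ)
    (z : notEndingIn false × ℤ) :
    cosetLift φ x ((letterPerm false true (by decide)).symm z) =
      φ (of true)⁻¹ (cosetLift φ x z) := by
  simp [cosetLift, letterPerm_symm_apply, hφ.2.1]

theorem cosetLift_cyclicPerm (hφ : ContGroupAction (FreeGroup Bool) X φ)
    {z : notEndingIn false × ℤ} (hz : (z.1 : FreeGroup Bool) ≠ 1) :
    cosetLift φ x (cyclicPerm false z) = φ ((of true)⁻¹ * of false) (cosetLift φ x z) := by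
  obtain ⟨h1, h2⟩ := cyclicPerm_apply_of_ne_one false hz
  simp [cosetLift, h1, h2, hφ.2.1]

theorem cosetLift_cyclicPerm_symm (hφ : ContGroupAction (FreeGroup Bool) X φ)
    {z : notEndingIn false × ℤ} (hz : (z.1 : FreeGroup Bool) ≠ 1) :
    cosetLift φ x ((cyclicPerm false).symm z) =
      φ ((of true)⁻¹ * of false)⁻¹ (cosetLift φ x z) := by
  obtain ⟨h1, h2⟩ := cyclicPerm_symm_apply_of_ne_one false hz
  simp [cosetLift, h1, h2, hφ.2.1]

theorem dist_cosetLift_cosetAction_of_false_lt (hφ : ContGroupAction (FreeGroup Bool) X φ)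
    {δ η : ℝ} (hδ : 0 < δ) (hx : ∀ n, dist (φ ((of true)⁻¹ * of false) (x n)) (x (n + 1)) < η)
    (hcont : ∀ y y', dist y y' < η → dist (φ (of true) y) (φ (of true) y') < δ)
    (z : notEndingIn false × ℤ) :
    dist (cosetLift φ x (cosetAction (of false) z)) (φ (of false) (cosetLift φ x z)) < δ := by
  have hb : φ (of false) = fun y => φ (of true) (φ ((of true)⁻¹ * of false) y) := by
    ext y; rw [← hφ.2.1, mul_inv_cancel_left]
  rw [cosetAction_of_false, Equiv.Perm.mul_apply, cosetLift_letterPerm x hφ, hb]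
  by_cases hz : (z.1 : FreeGroup Bool) = 1
  · obtain ⟨t, n⟩ := z
    obtain rfl : t = 1 := Subtype.ext hz
    rw [cyclicPerm_apply_one, cosetLift_one x hφ, cosetLift_one x hφ]
    exact hcont _ _ (by rw [dist_comm]; exact hx n)
  · rw [cosetLift_cyclicPerm x hφ hz, dist_self]
    exact hδ

theorem dist_cosetLift_cosetAction_of_false_inv_lt (hφ : ContGroupAction (FreeGroup Bool) X φ)
    {δ η : ℝ} (hδ : 0 < δ) (hx : ∀ n, dist (φ ((of true)⁻¹ * of false) (x n)) (x (n + 1)) < η)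
    (hcont : ∀ y y', dist y y' < η →
      dist (φ ((of true)⁻¹ * of false)⁻¹ y) (φ ((of true)⁻¹ * of false)⁻¹ y') < δ)
    (z : notEndingIn false × ℤ) :
    dist (cosetLift φ x (cosetAction (of false)⁻¹ z)) (φ (of false)⁻¹ (cosetLift φ x z)) < δ := by
  rw [_root_.map_inv, cosetAction_of_false, mul_inv_rev, Equiv.Perm.mul_apply, Equiv.Perm.inv_def,
    Equiv.Perm.inv_def]
  by_cases hw1 : (((letterPerm false true (by decide)).symm z).1 : FreeGroup Bool) = 1
  · obtain ⟨t, n⟩ := z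
    have hw : (letterPerm false true (by decide)).symm (t, n) = (1, n) :=
      Prod.ext (Subtype.ext hw1) rfl
    have ht : (t : FreeGroup Bool) = of true := by
      rw [letterPerm_symm_apply] at hw1
      exact (inv_mul_eq_one.mp hw1).symm
    have hc : φ (of false)⁻¹ (φ (of true) (x n)) = φ ((of true)⁻¹ * of false)⁻¹ (x n) := by
      rw [← hφ.2.1, mul_inv_rev, inv_inv]
    have hn :
        x (n - 1) = φ ((of true)⁻¹ * of false)⁻¹ (φ ((of true)⁻¹ * of false) (x (n - 1))) := by
      rw [← hφ.2.1, inv_mul_cancel, hφ.2.2]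
    rw [hw, cyclicPerm_symm_apply_one, cosetLift_one x hφ, cosetLift, ht, acBasis_of_true, hc, hn]
    exact hcont _ _ (by simpa using hx (n - 1))
  · rw [cosetLift_cyclicPerm_symm x hφ hw1, cosetLift_letterPerm_symm x hφ, ← hφ.2.1]
    simp [hδ]

theorem dist_cosetLift_cosetAction_lt (hφ : ContGroupAction (FreeGroup Bool) X φ)
    {δ η : ℝ} (hδ : 0 < δ) (hx : ∀ n, dist (φ ((of true)⁻¹ * of false) (x n)) (x (n + 1)) < η)
    (hcont : ∀ y y', dist y y' < η → dist (φ (of true) y) (φ (of true) y') < δ ∧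
      dist (φ ((of true)⁻¹ * of false)⁻¹ y) (φ ((of true)⁻¹ * of false)⁻¹ y') < δ) :
    ∀ s ∈ ({of true, of false, (of true)⁻¹, (of false)⁻¹} : Set (FreeGroup Bool)), ∀ z,
      dist (cosetLift φ x (cosetAction s z)) (φ s (cosetLift φ x z)) < δ := by
  rintro s (rfl | rfl | rfl | rfl) z
  · rwa [cosetAction_of_true, cosetLift_letterPerm x hφ, dist_self]
  · exact dist_cosetLift_cosetAction_of_false_lt x hφ hδ hx (fun y y' h => (hcont y y' h).1) z
  · rwa [_root_.map_inv, cosetAction_of_true, Equiv.Perm.inv_def, cosetLift_letterPerm_symm x hφ,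
      dist_self]
  · exact dist_cosetLift_cosetAction_of_false_inv_lt x hφ hδ hx (fun y y' h => (hcont y y' h).2) z

end

theorem stmt4 {X : Type*} [MetricSpace X] [CompactSpace X]
    (φ : FreeGroup Bool → X → X) (hφ : ContGroupAction (FreeGroup Bool) X φ)
    (S : Set (FreeGroup Bool))
    (hS : S = {FreeGroup.of true, FreeGroup.of false,
      (FreeGroup.of true)⁻¹, (FreeGroup.of false)⁻¹})
    (h : Shadowing S φ)
    (c : FreeGroup Bool) (hc : c = (FreeGroup.of true)⁻¹ * FreeGroup.of false) :
    ∀ ε > (0:ℝ), ∃ δ > (0:ℝ), ∀ x : ℤ → X,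
      (∀ n : ℤ, dist (φ c (x n)) (x (n + 1)) < δ) →
      ∃ y : X, ∀ n : ℤ, dist (φ (c ^ n) y) (x n) < ε := by
  subst hS hc
  intro ε hε
  obtain ⟨δ, hδ, hshadow⟩ := h ε hε
  obtain ⟨η, hη, hcont⟩ := Metric.uniformContinuous_iff.mp
    (CompactSpace.uniformContinuous_of_continuous
      ((hφ.1 (of true)).prodMk (hφ.1 ((of true)⁻¹ * of false)⁻¹))) δ hδ
  refine ⟨η, hη, fun x hx => ?_⟩
  obtain ⟨p, hp⟩ := hshadow _ (isPseudoOrbit_of_perm cosetAction (cosetLift φ x) (1, 0)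
    (dist_cosetLift_cosetAction_lt x hφ hδ hx fun y y' hy => by
      simpa only [Prod.dist_eq, max_lt_iff] using hcont hy))
  refine ⟨p, fun n => ?_⟩
  have hpn := hp (((of true)⁻¹ * of false) ^ n)
  rwa [cosetAction_zpow_apply_one, cosetLift_one x hφ, dist_comm] at hpn
end

section
/- A Borel probability measure μ on X is compatible with the persistent shadowing property for φ if and only if μ belongs to ⋂_{n∈ℕ} ⋃_{m∈ℕ} ⋂_{l∈ℕ} C_{PSh(φ)}(1/m, 1/n + 1/l), where C_{PSh(φ)}(δ,ε) = {μ ∈ M(X) : μ(PSh_φ(δ,ε)) = 1}. -/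
open MeasureTheory

/- The measure of a possibly non-measurable set is its outer measure, so a set of outer
probability one meets every set of positive measure, and conversely: if `μ s < 1`, then the
complement of a measurable hull of `s` has positive measure and misses `s`. What remains is
to discretise `ε` and `δ`, using that `PShSet S φ δ ε` shrinks as `δ` grows or `ε` shrinks. -/

theorem MeasureTheory.prob_eq_one_iff_inter_nonempty {X : Type*} [MeasurableSpace X]
    {μ : Measure X} [IsProbabilityMeasure μ] {s : Set X} :
    μ s = 1 ↔ ∀ A : Set X, MeasurableSet A → 0 < μ A → (A ∩ s).Nonempty := by
  constructor
  · intro hs A hA hApos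
    by_contra hAs
    have hsub : s ⊆ Aᶜ := fun x hxs hxA => hAs ⟨x, hxA, hxs⟩
    have : μ Aᶜ < 1 := by
      rw [prob_compl_eq_one_sub hA]
      exact ENNReal.sub_lt_self ENNReal.one_ne_top one_ne_zero hApos.ne'
    exact (hs ▸ measure_mono hsub).not_gt this
  · intro h
    refine le_antisymm prob_le_one (not_lt.mp fun hlt => ?_)
    set T := toMeasurable μ s
    have hTc : 0 < μ Tᶜ := by
      rw [prob_compl_eq_one_sub (measurableSet_toMeasurable μ s), measure_toMeasurable]
      exact tsub_pos_of_lt hlt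
    obtain ⟨x, hxT, hxs⟩ := h Tᶜ (measurableSet_toMeasurable μ s).compl hTc
    exact hxT (subset_toMeasurable μ s hxs)

theorem forall_pos_exists_pos_iff_forall_nat_inv {P : ℝ → ℝ → Prop}
    (hP : ∀ ⦃δ₁ δ₂ ε₁ ε₂ : ℝ⦄, δ₁ ≤ δ₂ → ε₁ ≤ ε₂ → P δ₂ ε₁ → P δ₁ ε₂) :
    (∀ ε > 0, ∃ δ > 0, P δ ε) ↔
      ∀ n : ℕ, 0 < n → ∃ m : ℕ, 0 < m ∧ ∀ l : ℕ, 0 < l →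
        P ((m : ℝ)⁻¹) ((n : ℝ)⁻¹ + (l : ℝ)⁻¹) := by
  constructor
  · intro h n _
    obtain ⟨δ, hδ, hPδ⟩ := h (n : ℝ)⁻¹ (by positivity)
    obtain ⟨m, hm⟩ := exists_nat_one_div_lt hδ
    refine ⟨m + 1, m.succ_pos, fun l _ => hP ?_ ?_ hPδ⟩
    · simpa using hm.le
    · exact le_add_of_nonneg_right (by positivity)
  · intro h ε hε
    obtain ⟨n, hn⟩ := exists_nat_one_div_lt (half_pos hε)
    obtain ⟨m, hm, hPm⟩ := h (n + 1) n.succ_pos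
    refine ⟨(m : ℝ)⁻¹, by positivity, hP le_rfl ?_ (hPm (n + 1) n.succ_pos)⟩
    have : ((n + 1 : ℕ) : ℝ)⁻¹ < ε / 2 := by simpa using hn
    linarith

theorem PShSet_subset_PShSet {G : Type*} [Group G] {X : Type*} [MetricSpace X]
    (S : Set G) (φ : G → X → X) {δ₁ δ₂ ε₁ ε₂ : ℝ} (hδ : δ₁ ≤ δ₂) (hε : ε₁ ≤ ε₂) :
    PShSet S φ δ₂ ε₁ ⊆ PShSet S φ δ₁ ε₂ := by
  intro x hx ψ hψ hclose f hf hf1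
  obtain ⟨p, hp⟩ := hx ψ hψ (fun s hs y => (hclose s hs y).trans_le hδ) f
    (fun s hs g => (hf s hs g).trans_le hδ) hf1
  exact ⟨p, fun g => (hp g).trans_le hε⟩

theorem stmt6_general {G : Type*} [Group G] {X : Type*} [MetricSpace X]
    [MeasurableSpace X]
    (S : Set G)
    (φ : G → X → X)
    (μ : ProbabilityMeasure X) :
    CompatiblePSh S φ μ.toMeasure ↔
      ∀ n : ℕ, 0 < n → ∃ m : ℕ, 0 < m ∧ ∀ l : ℕ, 0 < l →
        μ.toMeasure (PShSet S φ ((m : ℝ)⁻¹) ((n : ℝ)⁻¹ + (l : ℝ)⁻¹)) = 1 := by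
  have hcompat : CompatiblePSh S φ μ.toMeasure ↔
      ∀ ε > 0, ∃ δ > 0, μ.toMeasure (PShSet S φ δ ε) = 1 := by
    simp only [CompatiblePSh, prob_eq_one_iff_inter_nonempty]
  rw [hcompat]
  refine forall_pos_exists_pos_iff_forall_nat_inv fun δ₁ δ₂ ε₁ ε₂ hδ hε hP => ?_
  exact le_antisymm prob_le_one (hP ▸ measure_mono (PShSet_subset_PShSet S φ hδ hε))

theorem stmt6 {G : Type*} [Group G] {X : Type*} [MetricSpace X] [CompactSpace X]
    [MeasurableSpace X] [BorelSpace X]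
    (S : Set G) (hSfin : S.Finite) (hSsym : ∀ s ∈ S, s⁻¹ ∈ S)
    (hSgen : Subgroup.closure S = ⊤)
    (φ : G → X → X) (hφ : ContGroupAction G X φ)
    (μ : ProbabilityMeasure X) :
    CompatiblePSh S φ μ.toMeasure ↔
      ∀ n : ℕ, 0 < n → ∃ m : ℕ, 0 < m ∧ ∀ l : ℕ, 0 < l →
        μ.toMeasure (PShSet S φ ((m : ℝ)⁻¹) ((n : ℝ)⁻¹ + (l : ℝ)⁻¹)) = 1 :=
  stmt6_general S φ μ
end

section
/- The set M_{PSh}(X,φ) of Borel probability measures compatible with the persistent shadowing property for φ is an F_{σδ} subset of M(X) (a countable intersection of countable unions of closed sets) with respect to the weak* topology. -/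
open MeasureTheory

/-!
Compatibility says that for every ε some `PShSet S φ δ ε` has full outer measure. Up to shrinking
ε this is the condition `μ (closure (PShSet S φ δ ε)) = 1`, which is closed in μ by the
portmanteau theorem. Taking the closure costs only a little in ε: a point close to the initial
value of a pseudo orbit can replace it, and this affects only the finitely many constraints that
involve the identity.
-/

open Filter Topology Set

lemma ProbabilityMeasure.isClosed_setOf_measure_eq_one {X : Type*} [MetricSpace X]
    [MeasurableSpace X] [BorelSpace X] {K : Set X} (hK : IsClosed K) :
    IsClosed {μ : ProbabilityMeasure X | (μ : Measure X) K = 1} := by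
  refine isClosed_iff_frequently.2 fun μ hμ => le_antisymm prob_le_one ?_
  calc 1 ≤ limsup (fun ν : ProbabilityMeasure X => (ν : Measure X) K) (𝓝 μ) :=
        le_limsup_of_frequently_le' (hμ.mono fun _ hν => hν.ge)
    _ ≤ (μ : Measure X) K := ProbabilityMeasure.limsup_measure_closed_le_of_tendsto tendsto_id hK

lemma measure_compl_eq_zero_iff_forall_inter_nonempty {X : Type*} [MeasurableSpace X]
    {μ : Measure X} {K : Set X} (hK : MeasurableSet K) :
    μ Kᶜ = 0 ↔ ∀ A, MeasurableSet A → 0 < μ A → (A ∩ K).Nonempty := by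
  refine ⟨fun h A _ hA => ?_, fun h => ?_⟩
  · by_contra hAK
    have hAKc : A ⊆ Kᶜ := fun a ha haK => hAK ⟨a, ha, haK⟩
    exact hA.ne' (measure_mono_null hAKc h)
  · by_contra hKc
    obtain ⟨x, hxKc, hxK⟩ := h Kᶜ hK.compl (pos_iff_ne_zero.2 hKc)
    exact hxKc hxK

section PseudoOrbit

variable {G : Type*} [Group G] {X : Type*} [MetricSpace X] {S : Set G}

lemma IsPseudoOrbit.update_one [DecidableEq G] {ψ : G → X → X} (hψ1 : ∀ x, ψ 1 x = x) {δ : ℝ}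
    {f : G → X} (hf : IsPseudoOrbit S ψ δ f) {y : X}
    (hy : ∀ s ∈ S, dist (f s) (ψ s y) < δ ∧ dist y (ψ s (f s⁻¹)) < δ) :
    IsPseudoOrbit S ψ δ (Function.update f 1 y) := by
  intro s hs g
  rcases eq_or_ne g 1 with rfl | hg
  · rcases eq_or_ne s 1 with rfl | hs1
    · have hδ : 0 < δ := dist_nonneg.trans_lt (hy 1 hs).1
      simpa [hψ1] using hδ
    · simpa [hs1] using (hy s hs).1
  · rcases eq_or_ne (s * g) 1 with hsg | hsg
    · obtain rfl : g = s⁻¹ := eq_inv_of_mul_eq_one_right hsg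
      simpa [hsg, hg] using (hy s hs).2
    · simpa [hsg, hg] using hf s hs g

lemma IsPseudoOrbit.eventually_update_one [DecidableEq G] (hS : S.Finite) {ψ : G → X → X}
    (hψ : ContGroupAction G X ψ) {δ : ℝ} {f : G → X} (hf : IsPseudoOrbit S ψ δ f) :
    ∀ᶠ y in 𝓝 (f 1), IsPseudoOrbit S ψ δ (Function.update f 1 y) := by
  have hnear : ∀ᶠ y in 𝓝 (f 1),
      ∀ s ∈ S, dist (f s) (ψ s y) < δ ∧ dist y (ψ s (f s⁻¹)) < δ := by
    refine (eventually_all_finite hS).2 fun s hs => ?_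
    have h1 : dist (f s) (ψ s (f 1)) < δ := by simpa using hf s hs 1
    have h2 : dist (f 1) (ψ s (f s⁻¹)) < δ := by simpa using hf s hs s⁻¹
    have hψs := (hψ.1 s).continuousAt (x := f 1)
    exact (continuousAt_const.dist hψs |>.eventually_lt continuousAt_const h1).and
      (continuousAt_id.dist continuousAt_const |>.eventually_lt continuousAt_const h2)
  exact hnear.mono fun y hy => hf.update_one hψ.2.2 hy

lemma PShSet_subset_PShSet_s7 (φ : G → X → X) {δ δ' ε ε' : ℝ} (hδ : δ' ≤ δ) (hε : ε ≤ ε') :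
    PShSet S φ δ ε ⊆ PShSet S φ δ' ε' := by
  intro x hx ψ hψ hclose f hf hf1
  obtain ⟨p, hp⟩ := hx ψ hψ (fun s hs y => (hclose s hs y).trans_le hδ) f
    (fun s hs g => (hf s hs g).trans_le hδ) hf1
  exact ⟨p, fun g => (hp g).trans_le hε⟩

lemma closure_PShSet_subset (hS : S.Finite) (φ : G → X → X) {δ ε ε' : ℝ} (hε : ε' < ε) :
    closure (PShSet S φ δ ε') ⊆ PShSet S φ δ ε := by
  classical
  intro x hx ψ hψ hclose f hf hf1
  subst hf1
  obtain ⟨y, ⟨hyf, hy⟩, hyP⟩ := mem_closure_iff_nhds.1 hx _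
    ((hf.eventually_update_one hS hψ).and (Metric.ball_mem_nhds (f 1) (sub_pos.2 hε)))
  obtain ⟨p, hp⟩ := hyP ψ hψ hclose _ hyf (Function.update_self _ _ _)
  refine ⟨p, fun g => ?_⟩
  rcases eq_or_ne g 1 with rfl | hg
  · calc dist (f 1) (ψ 1 p) ≤ dist (f 1) y + dist y (ψ 1 p) := dist_triangle _ _ _
      _ < (ε - ε') + ε' := add_lt_add (by rwa [dist_comm]) (by simpa using hp 1)
      _ = ε := by ring
  · simpa [hg] using (hp g).trans hε

lemma compatiblePSh_iff_forall_exists_measure_closure_eq_one (hS : S.Finite)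
    (φ : G → X → X) [MeasurableSpace X] [BorelSpace X] (μ : Measure X) [IsProbabilityMeasure μ] :
    CompatiblePSh S φ μ ↔
      ∀ n : ℕ, ∃ m : ℕ, μ (closure (PShSet S φ (1 / (m + 1)) (1 / (n + 2)))) = 1 := by
  simp_rw [← prob_compl_eq_zero_iff isClosed_closure.measurableSet,
    measure_compl_eq_zero_iff_forall_inter_nonempty isClosed_closure.measurableSet]
  constructor
  · intro hμ n
    obtain ⟨δ, hδ, hmeets⟩ := hμ (1 / (n + 2)) (by positivity)
    obtain ⟨m, hm⟩ := exists_nat_one_div_lt hδ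
    refine ⟨m, fun A hAm hApos => (hmeets A hAm hApos).mono (inter_subset_inter_right A ?_)⟩
    exact (PShSet_subset_PShSet_s7 φ hm.le le_rfl).trans subset_closure
  · intro hμ ε hε
    obtain ⟨n, hn⟩ := exists_nat_one_div_lt hε
    obtain ⟨m, hmeets⟩ := hμ n
    have hclosure : closure (PShSet S φ (1 / (m + 1)) (1 / (n + 2))) ⊆
        PShSet S φ (1 / (m + 1)) ε :=
      (closure_PShSet_subset hS φ (one_div_lt_one_div_of_lt (by positivity) (by linarith))).trans
        (PShSet_subset_PShSet_s7 φ le_rfl hn.le)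
    exact ⟨1 / (m + 1), by positivity, fun A hAm hApos =>
      (hmeets A hAm hApos).mono (inter_subset_inter_right A hclosure)⟩

end PseudoOrbit

theorem stmt7_general {G : Type*} [Group G] {X : Type*} [MetricSpace X]
    [MeasurableSpace X] [BorelSpace X]
    (S : Set G) (hSfin : S.Finite)
    (φ : G → X → X) :
    ∃ F : ℕ → ℕ → Set (ProbabilityMeasure X), (∀ n m : ℕ, IsClosed (F n m)) ∧
      {μ : ProbabilityMeasure X | CompatiblePSh S φ μ.toMeasure} =
        ⋂ n : ℕ, ⋃ m : ℕ, F n m := by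
  refine ⟨fun n m => {μ : ProbabilityMeasure X |
      (μ : Measure X) (closure (PShSet S φ (1 / (m + 1)) (1 / (n + 2)))) = 1},
    fun n m => ProbabilityMeasure.isClosed_setOf_measure_eq_one isClosed_closure, ?_⟩
  ext μ
  simpa using compatiblePSh_iff_forall_exists_measure_closure_eq_one hSfin φ (μ : Measure X)

theorem stmt7 {G : Type*} [Group G] {X : Type*} [MetricSpace X] [CompactSpace X]
    [MeasurableSpace X] [BorelSpace X]
    (S : Set G) (hSfin : S.Finite) (hSsym : ∀ s ∈ S, s⁻¹ ∈ S)
    (hSgen : Subgroup.closure S = ⊤)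
    (φ : G → X → X) (hφ : ContGroupAction G X φ) :
    ∃ F : ℕ → ℕ → Set (ProbabilityMeasure X), (∀ n m : ℕ, IsClosed (F n m)) ∧
      {μ : ProbabilityMeasure X | CompatiblePSh S φ μ.toMeasure} =
        ⋂ n : ℕ, ⋃ m : ℕ, F n m :=
  stmt7_general S hSfin φ
end

section
/- If h: X → Y is a homeomorphism of compact metric spaces and μ is a Borel probability measure compatible with the persistent shadowing property for the action φ: G × X → X, then the pushforward h_*(μ) is compatible with the persistent shadowing property for the conjugated action h∘φ∘h⁻¹: G × Y → Y defined by (g,y) ↦ h(φ(g, h⁻¹(y))). -/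
open MeasureTheory

/-! Conjugating by `h` turns `ψ`, a `δ`-pseudo orbit and `δ`-closeness on `Y` into the same
data on `X` at scale `δ'`, via uniform continuity of `h⁻¹`; a shadowing orbit on `X` at scale
`ε'` is then carried back by `h` to one at scale `ε`. On compact spaces both moduli exist,
and `h_*μ` charges `B` exactly when `μ` charges `h⁻¹ B`. -/

section Conjugation

variable {G : Type*} {X Y : Type*}

def conjAction (e : X ≃ Y) (φ : G → X → X) : G → Y → Y :=
  fun g y => e (φ g (e.symm y))

@[simp]
theorem conjAction_apply (e : X ≃ Y) (φ : G → X → X) (g : G) (y : Y) :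
    conjAction e φ g y = e (φ g (e.symm y)) :=
  rfl

@[simp]
theorem conjAction_symm_conjAction (e : X ≃ Y) (φ : G → X → X) :
    conjAction e.symm (conjAction e φ) = φ := by
  ext g x
  simp

variable [Group G] [MetricSpace X] [MetricSpace Y]

theorem ContGroupAction.conjAction {φ : G → X → X} (hφ : ContGroupAction G X φ) (h : X ≃ₜ Y) :
    ContGroupAction G Y (conjAction h.toEquiv φ) := by
  obtain ⟨hcont, hmul, hone⟩ := hφ
  refine ⟨fun g => h.continuous.comp ((hcont g).comp h.symm.continuous), ?_, ?_⟩
  · intro g g' y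
    simp [hmul]
  · intro y
    simp [hone]

variable {S : Set G} {e : X ≃ Y} {δ δ' : ℝ}

theorem CloseActions.conjAction {φ ψ : G → X → X} (hclose : CloseActions S φ ψ δ)
    (he : ∀ ⦃a b : X⦄, dist a b < δ → dist (e a) (e b) < δ') :
    CloseActions S (conjAction e φ) (conjAction e ψ) δ' :=
  fun s hs y => he (hclose s hs (e.symm y))

theorem IsPseudoOrbit.conjAction {ψ : G → X → X} {f : G → X} (hf : IsPseudoOrbit S ψ δ f)
    (he : ∀ ⦃a b : X⦄, dist a b < δ → dist (e a) (e b) < δ') :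
    IsPseudoOrbit S (conjAction e ψ) δ' (e ∘ f) := by
  intro s hs g
  simpa using he (hf s hs g)

theorem apply_mem_PShSet_conjAction {φ : G → X → X} (h : X ≃ₜ Y) {x : X} {ε ε' : ℝ}
    (hδ : ∀ ⦃a b : Y⦄, dist a b < δ → dist (h.symm a) (h.symm b) < δ')
    (hε : ∀ ⦃a b : X⦄, dist a b < ε' → dist (h a) (h b) < ε)
    (hx : x ∈ PShSet S φ δ' ε') :
    h x ∈ PShSet S (conjAction h.toEquiv φ) δ ε := by
  intro ψ hψ hclose f hf hf1
  have hcloseX : CloseActions S φ (conjAction h.toEquiv.symm ψ) δ' := by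
    rw [← conjAction_symm_conjAction h.toEquiv φ]
    exact hclose.conjAction hδ
  obtain ⟨p, hp⟩ := hx _ (hψ.conjAction h.symm) hcloseX _
    (hf.conjAction hδ) (by simp [hf1])
  exact ⟨h p, fun g => by simpa using hε (hp g)⟩

end Conjugation

theorem CompatiblePSh.map_homeomorph {G : Type*} [Group G] {X Y : Type*}
    [MetricSpace X] [MeasurableSpace X] [BorelSpace X]
    [MetricSpace Y] [MeasurableSpace Y] [BorelSpace Y]
    {S : Set G} {φ : G → X → X} {μ : Measure X} (hμ : CompatiblePSh S φ μ) (h : X ≃ₜ Y)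
    (hh : UniformContinuous h) (hh_symm : UniformContinuous h.symm) :
    CompatiblePSh S (conjAction h.toEquiv φ) (μ.map h) := by
  intro ε hε
  obtain ⟨ε', hε', hhε⟩ := Metric.uniformContinuous_iff.mp hh ε hε
  obtain ⟨δ', hδ', hμδ'⟩ := hμ ε' hε'
  obtain ⟨δ, hδ, hhδ⟩ := Metric.uniformContinuous_iff.mp hh_symm δ' hδ'
  refine ⟨δ, hδ, fun B hB hBpos => ?_⟩
  rw [← h.toMeasurableEquiv_coe, MeasurableEquiv.map_apply] at hBpos
  obtain ⟨x, hxB, hxP⟩ := hμδ' _ (hB.preimage h.continuous.measurable) hBpos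
  exact ⟨h x, hxB, apply_mem_PShSet_conjAction h hhδ hhε hxP⟩

theorem stmt8_general {G : Type*} [Group G] {X : Type*} [MetricSpace X] [CompactSpace X]
    [MeasurableSpace X] [BorelSpace X]
    {Y : Type*} [MetricSpace Y] [CompactSpace Y] [MeasurableSpace Y] [BorelSpace Y]
    (S : Set G)
    (φ : G → X → X)
    (h : X ≃ₜ Y) (μ : Measure X)
    (hμ : CompatiblePSh S φ μ) :
    CompatiblePSh S (fun g y => h (φ g (h.symm y))) (Measure.map h μ) :=
  hμ.map_homeomorph h (CompactSpace.uniformContinuous_of_continuous h.continuous)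
    (CompactSpace.uniformContinuous_of_continuous h.symm.continuous)

theorem stmt8 {G : Type*} [Group G] {X : Type*} [MetricSpace X] [CompactSpace X]
    [MeasurableSpace X] [BorelSpace X]
    {Y : Type*} [MetricSpace Y] [CompactSpace Y] [MeasurableSpace Y] [BorelSpace Y]
    (S : Set G) (hSfin : S.Finite) (hSsym : ∀ s ∈ S, s⁻¹ ∈ S)
    (hSgen : Subgroup.closure S = ⊤)
    (φ : G → X → X) (hφ : ContGroupAction G X φ)
    (h : X ≃ₜ Y) (μ : Measure X) [IsProbabilityMeasure μ]
    (hμ : CompatiblePSh S φ μ) :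
    CompatiblePSh S (fun g y => h (φ g (h.symm y))) (Measure.map h μ) :=
  stmt8_general S φ h μ hμ
end
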